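/- For every word w in X·({@} ∪ {λx : x ∈ X})* and every simple type τ: the word w has type τ under the word-typing rules if and only if the stack run of w is defined and equals argList(τ). -/

import Mathlib

/-- Simple types: τ ::= o | τ → τ. -/
inductive Ty : Type
  | o : Ty
  | arrow : Ty → Ty → Ty
deriving DecidableEq


/-- The alphabet `X^λ = X ∪ {@} ∪ {λx : x ∈ X}`. -/
inductive Letter (V : Type) : Type
  | var : V → Letter V
  | lam : V → Letter V
  | app : Letter V

/-- Word-typing rules on nonempty words over `X^λ`:
the one-letter word `x` has the type of `x`; if `u : τ` then `u·λx : σ → τ`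
where `σ` is the type of `x`; if `u : σ → τ` then `u·@ : τ`. -/
inductive WTy {V : Type} (tyOf : V → Ty) : List (Letter V) → Ty → Prop
  | var (x : V) : WTy tyOf [Letter.var x] (tyOf x)
  | lam {u : List (Letter V)} {τ : Ty} (x : V) :
      WTy tyOf u τ → WTy tyOf (u ++ [Letter.lam x]) (Ty.arrow (tyOf x) τ)
  | app {u : List (Letter V)} {σ τ : Ty} :
      WTy tyOf u (Ty.arrow σ τ) → WTy tyOf (u ++ [Letter.app]) τ

/-- The tail alphabet `{@} ∪ {λx : x ∈ X}`. -/
inductive TLetter (V : Type) : Type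
  | lam : V → TLetter V
  | app : TLetter V

/-- A word in `X·({@} ∪ {λx : x ∈ X})*`, encoded as its initial variable `x`
together with its tail `w`. -/
def toWord {V : Type} (x : V) (w : List (TLetter V)) : List (Letter V) :=
  Letter.var x :: w.map (fun l => match l with
    | TLetter.lam y => Letter.lam y
    | TLetter.app => Letter.app)

/-- `argList τ` is the list of argument types of `τ`:
`argList o = []` and `argList (σ → τ) = σ :: argList τ`. -/
def argList : Ty → List Ty
  | Ty.o => []
  | Ty.arrow σ τ => σ :: argList τ

/-- Process a word over `{@} ∪ {λx : x ∈ X}` on a stack of simple types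
(head = top): push the type of `x` on letter `λx`, pop the top element on
letter `@` (undefined if the stack is empty). -/
def runStack {V : Type} (tyOf : V → Ty) : List (TLetter V) → List Ty → Option (List Ty)
  | [], s => some s
  | TLetter.lam x :: w, s => runStack tyOf w (tyOf x :: s)
  | TLetter.app :: _, [] => none
  | TLetter.app :: w, _ :: s => runStack tyOf w s

/-!
Both sides obey the same recursion on the last letter of the word. Typing `u·λy` at `τ` means
`τ = tyOf y → τ'` with `u : τ'`, i.e. `argList τ` is `argList τ'` with `tyOf y` pushed; typing
`u·@` at `τ` means `u : σ → τ`, i.e. `argList τ` is `argList (σ → τ)` with `σ` popped. On the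
one-letter word `x` both sides say `τ = tyOf x`, since `argList` is injective.
-/

theorem argList_injective : Function.Injective argList := by
  intro a b h
  induction a generalizing b with
  | o => cases b <;> simp_all [argList]
  | arrow σ τ _ ih =>
    cases b with
    | o => simp [argList] at h
    | arrow σ' τ' =>
      simp only [argList, List.cons.injEq] at h
      rw [h.1, ih h.2]

theorem argList_eq_cons_iff {τ σ : Ty} {s : List Ty} :
    argList τ = σ :: s ↔ ∃ τ', τ = .arrow σ τ' ∧ argList τ' = s := by
  cases τ with
  | o => simp [argList]
  | arrow σ' τ' => simp [argList, eq_comm]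

section Stack

variable {V : Type} (tyOf : V → Ty)

theorem runStack_append (w₁ w₂ : List (TLetter V)) (s : List Ty) :
    runStack tyOf (w₁ ++ w₂) s = (runStack tyOf w₁ s).bind (runStack tyOf w₂) := by
  induction w₁ generalizing s with
  | nil => rfl
  | cons t w ih =>
    cases t with
    | lam y => exact ih _
    | app =>
      cases s with
      | nil => rfl
      | cons _ s => exact ih s

theorem runStack_append_lam_eq_argList_iff (w : List (TLetter V)) (y : V) (s : List Ty)
    (τ : Ty) :
    runStack tyOf (w ++ [.lam y]) s = some (argList τ) ↔
      ∃ τ', τ = .arrow (tyOf y) τ' ∧ runStack tyOf w s = some (argList τ') := by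
  rw [runStack_append, Option.bind_eq_some_iff]
  constructor
  · rintro ⟨s', hw, hs'⟩
    obtain ⟨τ', rfl, rfl⟩ := argList_eq_cons_iff.mp (Option.some.inj hs').symm
    exact ⟨τ', rfl, hw⟩
  · rintro ⟨τ', rfl, hw⟩
    exact ⟨_, hw, rfl⟩

theorem runStack_append_app_eq_argList_iff (w : List (TLetter V)) (s : List Ty) (τ : Ty) :
    runStack tyOf (w ++ [.app]) s = some (argList τ) ↔
      ∃ σ, runStack tyOf w s = some (argList (.arrow σ τ)) := by
  rw [runStack_append, Option.bind_eq_some_iff]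
  constructor
  · rintro ⟨_ | ⟨σ, s'⟩, hw, hs'⟩
    · exact absurd hs' nofun
    · have hs : s' = argList τ := Option.some.inj hs'
      exact ⟨σ, by rw [hw, hs, argList]⟩
  · rintro ⟨σ, hw⟩
    exact ⟨_, hw, rfl⟩

end Stack

section Typing

variable {V : Type} {tyOf : V → Ty}

theorem WTy.singleton_var_iff {x : V} {τ : Ty} : WTy tyOf [.var x] τ ↔ τ = tyOf x := by
  constructor
  · intro h
    generalize hl : [Letter.var x] = l at h
    cases h with
    | var => simp_all
    | lam | app => simp [List.singleton_eq_append_iff] at hl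
  · rintro rfl
    exact .var x

theorem WTy.append_lam_iff {u : List (Letter V)} {y : V} {τ : Ty} :
    WTy tyOf (u ++ [.lam y]) τ ↔ ∃ τ', τ = .arrow (tyOf y) τ' ∧ WTy tyOf u τ' := by
  constructor
  · intro h
    generalize hl : u ++ [Letter.lam y] = l at h
    cases h with
    | var => simp [List.append_eq_singleton_iff] at hl
    | lam z h =>
      obtain ⟨rfl, rfl⟩ : u = _ ∧ y = z := by simpa using hl
      exact ⟨_, rfl, h⟩
    | app => simp at hl
  · rintro ⟨τ', rfl, h⟩
    exact .lam y h

theorem WTy.append_app_iff {u : List (Letter V)} {τ : Ty} :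
    WTy tyOf (u ++ [.app]) τ ↔ ∃ σ, WTy tyOf u (.arrow σ τ) := by
  constructor
  · intro h
    generalize hl : u ++ [Letter.app] = l at h
    cases h with
    | var => simp [List.append_eq_singleton_iff] at hl
    | lam => simp at hl
    | app h =>
      obtain rfl : u = _ := by simpa using hl
      exact ⟨_, h⟩
  · rintro ⟨σ, h⟩
    exact .app h

end Typing

theorem toWord_append_lam {V : Type} (x y : V) (w : List (TLetter V)) :
    toWord x (w ++ [.lam y]) = toWord x w ++ [.lam y] := by
  simp [toWord]

theorem toWord_append_app {V : Type} (x : V) (w : List (TLetter V)) :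
    toWord x (w ++ [.app]) = toWord x w ++ [.app] := by
  simp [toWord]

theorem word_type_iff_stack_run_general {V : Type} (tyOf : V → Ty)
    (x : V) (w : List (TLetter V)) (τ : Ty) :
    WTy tyOf (toWord x w) τ ↔ runStack tyOf w (argList (tyOf x)) = some (argList τ) := by
  induction w using List.reverseRecOn generalizing τ with
  | nil =>
    rw [toWord, List.map_nil, WTy.singleton_var_iff, runStack, Option.some.injEq,
      argList_injective.eq_iff, eq_comm]
  | append_singleton w t ih =>
    cases t with
    | lam y =>
      rw [toWord_append_lam, WTy.append_lam_iff, runStack_append_lam_eq_argList_iff]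
      simp only [ih]
    | app =>
      rw [toWord_append_app, WTy.append_app_iff, runStack_append_app_eq_argList_iff]
      simp only [ih]

/-- A word `x·w` in `X·({@} ∪ {λx : x ∈ X})*` has type `τ` iff its stack run,
started from `argList` of the type of `x`, is defined and equals `argList τ`. -/
theorem word_type_iff_stack_run {V : Type} [Fintype V] (tyOf : V → Ty)
    (x : V) (w : List (TLetter V)) (τ : Ty) :
    WTy tyOf (toWord x w) τ ↔ runStack tyOf w (argList (tyOf x)) = some (argList τ) :=
  word_type_iff_stack_run_general tyOf x w τ
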